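/- For every n-player game p: X = ∏ᵢ₌₁ⁿ Xᵢ → [0,1]ⁿ with compacta Xᵢ and continuous p, every continuous t-norm ∗, and every player i, the expected payoff map P*ᵢ: Xᵢ × MX₋ᵢ → [0,1] defined by P*ᵢ(xᵢ, ν) = ∫_{X₋ᵢ}^{∨∗} pᵢ^{xᵢ} dν is continuous. -/
import Mathlib


open Set TopologicalSpace

universe u v

/-- A (upper-semicontinuous) capacity on a topological space `X`:
a normalized monotone set function on the closed subsets, upper semicontinuous
in the sense of Zarichnyi–Nykyforchyn. -/
structure Capacity (X : Type u) [TopologicalSpace X] : Type u where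
  toFun : Closeds X → ℝ
  empty' : toFun ⊥ = 0
  univ' : toFun ⊤ = 1
  mono' : ∀ F G : Closeds X, F ≤ G → toFun F ≤ toFun G
  usc' : ∀ (F : Closeds X) (a : ℝ), toFun F < a →
    ∃ O : Set X, IsOpen O ∧ (F : Set X) ⊆ O ∧ ∀ B : Closeds X, (B : Set X) ⊆ O → toFun B < a

namespace Capacity

variable {X : Type u} [TopologicalSpace X]

/-- Value of a capacity on (the closure of) an arbitrary set; on closed sets this is
the value of the capacity. -/
def cval (ν : Capacity X) (A : Set X) : ℝ := ν.toFun ⟨closure A, isClosed_closure⟩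

/-- The sup-extension of a capacity to open sets:
`ν(U) = sup {ν K : K closed, K ⊆ U}`. -/
noncomputable def oval (ν : Capacity X) (U : Set X) : ℝ :=
  sSup {r : ℝ | ∃ K : Closeds X, (K : Set X) ⊆ U ∧ ν.toFun K = r}

end Capacity

/-- The topology on the space `MX` of capacities, generated by the subbase
`O₋(F,a) = {c : c(F) < a}` (`F` closed) and `O₊(U,a) = {c : c(U) > a}` (`U` open). -/
instance capacityTopology (X : Type u) [TopologicalSpace X] : TopologicalSpace (Capacity X) :=
  TopologicalSpace.generateFrom
    ({S | ∃ (F : Closeds X) (a : ℝ), a ∈ Icc (0:ℝ) 1 ∧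
        S = {c : Capacity X | c.toFun F < a}} ∪
     {S | ∃ U : Set X, IsOpen U ∧ ∃ a ∈ Icc (0:ℝ) 1,
        S = {c : Capacity X | a < c.oval U}})

/-- A possibility capacity: `ν(A ∪ B) = max (ν A) (ν B)` on closed sets. -/
def IsPossibility {X : Type u} [TopologicalSpace X] (ν : Capacity X) : Prop :=
  ∀ A B : Closeds X, ν.toFun (A ⊔ B) = max (ν.toFun A) (ν.toFun B)

/-- A necessity capacity: `ν(A ∩ B) = min (ν A) (ν B)` on closed sets. -/
def IsNecessity {X : Type u} [TopologicalSpace X] (ν : Capacity X) : Prop :=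
  ∀ A B : Closeds X, ν.toFun (A ⊓ B) = min (ν.toFun A) (ν.toFun B)

/-- A triangular norm on `[0,1]`. -/
structure Tnorm : Type where
  toFun : ℝ → ℝ → ℝ
  mem' : ∀ s ∈ Icc (0:ℝ) 1, ∀ t ∈ Icc (0:ℝ) 1, toFun s t ∈ Icc (0:ℝ) 1
  comm' : ∀ s ∈ Icc (0:ℝ) 1, ∀ t ∈ Icc (0:ℝ) 1, toFun s t = toFun t s
  assoc' : ∀ s ∈ Icc (0:ℝ) 1, ∀ t ∈ Icc (0:ℝ) 1, ∀ r ∈ Icc (0:ℝ) 1,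
    toFun (toFun s t) r = toFun s (toFun t r)
  mono' : ∀ s₁ ∈ Icc (0:ℝ) 1, ∀ s₂ ∈ Icc (0:ℝ) 1, ∀ t₁ ∈ Icc (0:ℝ) 1, ∀ t₂ ∈ Icc (0:ℝ) 1,
    s₁ ≤ s₂ → t₁ ≤ t₂ → toFun s₁ t₁ ≤ toFun s₂ t₂
  one' : ∀ s ∈ Icc (0:ℝ) 1, toFun s 1 = s

/-- Continuity of a t-norm (on the unit square). -/
def Tnorm.Cont (star : Tnorm) : Prop :=
  ContinuousOn (fun q : ℝ × ℝ => star.toFun q.1 q.2) (Icc 0 1 ×ˢ Icc 0 1)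

/-- The t-normed (fuzzy) integral `∫^{∨∗} f dν = sup { ν(f⁻¹[t,1]) ∗ t : t ∈ [0,1] }`. -/
noncomputable def tInt {X : Type u} [TopologicalSpace X] (star : Tnorm) (ν : Capacity X) (f : X → ℝ) : ℝ :=
  sSup {r : ℝ | ∃ t ∈ Icc (0:ℝ) 1, r = star.toFun (ν.cval (f ⁻¹' Icc t 1)) t}
/-- Expected payoff of player `i` choosing pure strategy `x`, given belief `ν` about the
opponents' strategy combinations: `P*ᵢ(x, ν) = ∫^{∨∗}_{X₋ᵢ} pᵢ(x, ·) dν`. -/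
noncomputable def Pexp {n : ℕ} (X : Fin (n+1) → Type u) [∀ j, TopologicalSpace (X j)]
    (p : (∀ j, X j) → Fin (n+1) → ℝ) (star : Tnorm) (i : Fin (n+1))
    (x : X i) (ν : Capacity (∀ k : Fin n, X (i.succAbove k))) : ℝ :=
  tInt star ν fun y => p (i.insertNth x y) i

/-- The best response set of player `i` given belief `ν`:
`R*ᵢ(ν) = {x : P*ᵢ(x, ν) = max_z P*ᵢ(z, ν)}`. -/
noncomputable def BestResp {n : ℕ} (X : Fin (n+1) → Type u) [∀ j, TopologicalSpace (X j)]
    (p : (∀ j, X j) → Fin (n+1) → ℝ) (star : Tnorm) (i : Fin (n+1))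
    (ν : Capacity (∀ k : Fin n, X (i.succAbove k))) : Set (X i) :=
  {x : X i | Pexp X p star i x ν = sSup (Set.range fun z : X i => Pexp X p star i z ν)}

/-! ### Auxiliary lemmas for the continuity of the t-normed integral -/

section Aux

namespace Capacity

variable {Y : Type u} [TopologicalSpace Y]

lemma toFun_nonneg (ν : Capacity Y) (F : Closeds Y) : 0 ≤ ν.toFun F := by
  have h := ν.mono' ⊥ F bot_le
  rwa [ν.empty'] at h

lemma toFun_le_one (ν : Capacity Y) (F : Closeds Y) : ν.toFun F ≤ 1 := by
  have h := ν.mono' F ⊤ le_top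
  rwa [ν.univ'] at h

lemma cval_mem (ν : Capacity Y) (A : Set Y) : ν.cval A ∈ Icc (0:ℝ) 1 :=
  ⟨ν.toFun_nonneg _, ν.toFun_le_one _⟩

lemma cval_mono (ν : Capacity Y) {A B : Set Y} (h : A ⊆ B) : ν.cval A ≤ ν.cval B :=
  ν.mono' _ _ (closure_mono h)

lemma cval_eq_toFun (ν : Capacity Y) {A : Set Y} (hA : IsClosed A) :
    ν.cval A = ν.toFun ⟨A, hA⟩ := by
  unfold cval
  congr 1
  exact SetLike.coe_injective hA.closure_eq

end Capacity

namespace Tnorm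

variable (star : Tnorm)

lemma mem_Icc {s t : ℝ} (hs : s ∈ Icc (0:ℝ) 1) (ht : t ∈ Icc (0:ℝ) 1) :
    star.toFun s t ∈ Icc (0:ℝ) 1 := star.mem' s hs t ht

lemma le_right {s t : ℝ} (hs : s ∈ Icc (0:ℝ) 1) (ht : t ∈ Icc (0:ℝ) 1) :
    star.toFun s t ≤ t := by
  have h := star.mono' s hs 1 ⟨zero_le_one, le_refl 1⟩ t ht t ht hs.2 (le_refl t)
  rw [star.comm' 1 ⟨zero_le_one, le_refl 1⟩ t ht, star.one' t ht] at h
  exact h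

lemma le_left {s t : ℝ} (hs : s ∈ Icc (0:ℝ) 1) (ht : t ∈ Icc (0:ℝ) 1) :
    star.toFun s t ≤ s := by
  have h := star.mono' s hs s hs t ht 1 ⟨zero_le_one, le_refl 1⟩ (le_refl s) ht.2
  rwa [star.one' s hs] at h

/-- Uniform continuity of a continuous t-norm on the unit square. -/
lemma Cont.uc {star : Tnorm} (h : star.Cont) {ε : ℝ} (hε : 0 < ε) :
    ∃ δ > 0, ∀ s ∈ Icc (0:ℝ) 1, ∀ t ∈ Icc (0:ℝ) 1, ∀ s' ∈ Icc (0:ℝ) 1, ∀ t' ∈ Icc (0:ℝ) 1,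
      |s - s'| ≤ δ → |t - t'| ≤ δ → |star.toFun s t - star.toFun s' t'| ≤ ε := by
  have hK : IsCompact (Icc (0:ℝ) 1 ×ˢ Icc (0:ℝ) 1) := isCompact_Icc.prod isCompact_Icc
  have huc := hK.uniformContinuousOn_of_continuous h
  rw [Metric.uniformContinuousOn_iff_le] at huc
  obtain ⟨δ, hδ, H⟩ := huc ε hε
  refine ⟨δ, hδ, fun s hs t ht s' hs' t' ht' h1 h2 => ?_⟩
  have := H (s, t) ⟨hs, ht⟩ (s', t') ⟨hs', ht'⟩ ?_
  · simpa [Real.dist_eq] using this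
  · rw [Prod.dist_eq]
    simp only [Real.dist_eq]
    exact max_le h1 h2

end Tnorm

section tIntLemmas

variable {Y : Type u} [TopologicalSpace Y] (star : Tnorm) (ν : Capacity Y) (f : Y → ℝ)

lemma mem_tIntSet {t : ℝ} (ht : t ∈ Icc (0:ℝ) 1) :
    star.toFun (ν.cval (f ⁻¹' Icc t 1)) t ∈
      {r : ℝ | ∃ t ∈ Icc (0:ℝ) 1, r = star.toFun (ν.cval (f ⁻¹' Icc t 1)) t} :=
  ⟨t, ht, rfl⟩

lemma tIntSet_nonempty :
    {r : ℝ | ∃ t ∈ Icc (0:ℝ) 1, r = star.toFun (ν.cval (f ⁻¹' Icc t 1)) t}.Nonempty :=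
  ⟨_, mem_tIntSet star ν f ⟨le_refl 0, zero_le_one⟩⟩

lemma tIntSet_subset :
    {r : ℝ | ∃ t ∈ Icc (0:ℝ) 1, r = star.toFun (ν.cval (f ⁻¹' Icc t 1)) t} ⊆ Icc (0:ℝ) 1 := by
  rintro r ⟨t, ht, rfl⟩
  exact star.mem_Icc (ν.cval_mem _) ht

lemma tIntSet_bddAbove :
    BddAbove {r : ℝ | ∃ t ∈ Icc (0:ℝ) 1, r = star.toFun (ν.cval (f ⁻¹' Icc t 1)) t} :=
  ⟨1, fun r hr => (tIntSet_subset star ν f hr).2⟩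

lemma le_tInt {t : ℝ} (ht : t ∈ Icc (0:ℝ) 1) :
    star.toFun (ν.cval (f ⁻¹' Icc t 1)) t ≤ tInt star ν f :=
  le_csSup (tIntSet_bddAbove star ν f) (mem_tIntSet star ν f ht)

lemma tInt_le {c : ℝ} (h : ∀ t ∈ Icc (0:ℝ) 1, star.toFun (ν.cval (f ⁻¹' Icc t 1)) t ≤ c) :
    tInt star ν f ≤ c := by
  refine csSup_le (tIntSet_nonempty star ν f) ?_
  rintro r ⟨t, ht, rfl⟩
  exact h t ht

lemma tInt_nonneg : 0 ≤ tInt star ν f :=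
  le_trans (star.mem_Icc (ν.cval_mem _) (⟨le_refl 0, zero_le_one⟩ : (0:ℝ) ∈ Icc (0:ℝ) 1)).1
    (le_tInt star ν f ⟨le_refl 0, zero_le_one⟩)

lemma tInt_exists_lt {c : ℝ} (h : c < tInt star ν f) :
    ∃ t ∈ Icc (0:ℝ) 1, c < star.toFun (ν.cval (f ⁻¹' Icc t 1)) t := by
  by_contra hc
  push_neg at hc
  exact absurd (tInt_le star ν f hc) (not_le.mpr h)

end tIntLemmas

end Aux

section Core

variable {Y : Type u} [TopologicalSpace Y]

/-- Perturbing the integrand by at most `δ` changes the integral by at most `ε`. -/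
lemma tInt_le_tInt_add (star : Tnorm) (ν : Capacity Y) {f g : Y → ℝ}
    (hg01 : ∀ y, g y ∈ Icc (0:ℝ) 1) {δ ε : ℝ} (hδ : 0 < δ)
    (H : ∀ s ∈ Icc (0:ℝ) 1, ∀ t ∈ Icc (0:ℝ) 1, ∀ s' ∈ Icc (0:ℝ) 1, ∀ t' ∈ Icc (0:ℝ) 1,
      |s - s'| ≤ δ → |t - t'| ≤ δ → |star.toFun s t - star.toFun s' t'| ≤ ε)
    (hfg : ∀ y, |f y - g y| ≤ δ) :
    tInt star ν f ≤ tInt star ν g + ε := by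
  refine tInt_le star ν f (fun t ht => ?_)
  set t' : ℝ := max (t - δ) 0 with ht'def
  have ht' : t' ∈ Icc (0:ℝ) 1 := ⟨le_max_right _ _, max_le (by linarith [ht.2]) zero_le_one⟩
  have htt' : |t - t'| ≤ δ := by
    rw [abs_le]
    constructor
    · have : t' ≤ t := max_le (by linarith) ht.1
      linarith
    · have : t - δ ≤ t' := le_max_left _ _
      linarith
  have hsub : f ⁻¹' Icc t 1 ⊆ g ⁻¹' Icc t' 1 := by
    intro y hy
    have h1 : t ≤ f y := hy.1
    have h2 := hfg y
    rw [abs_le] at h2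
    exact ⟨max_le (by linarith) (hg01 y).1, (hg01 y).2⟩
  have hcv : ν.cval (f ⁻¹' Icc t 1) ≤ ν.cval (g ⁻¹' Icc t' 1) := ν.cval_mono hsub
  have h1 : star.toFun (ν.cval (f ⁻¹' Icc t 1)) t ≤ star.toFun (ν.cval (g ⁻¹' Icc t' 1)) t :=
    star.mono' _ (ν.cval_mem _) _ (ν.cval_mem _) t ht t ht hcv (le_refl t)
  have h2 : star.toFun (ν.cval (g ⁻¹' Icc t' 1)) t ≤
      star.toFun (ν.cval (g ⁻¹' Icc t' 1)) t' + ε := by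
    have h := H (ν.cval (g ⁻¹' Icc t' 1)) (ν.cval_mem _) t ht
      (ν.cval (g ⁻¹' Icc t' 1)) (ν.cval_mem _) t' ht'
      (by rw [sub_self, abs_zero]; exact hδ.le) htt'
    have this := abs_le.mp h
    linarith [this.2]
  have h3 : star.toFun (ν.cval (g ⁻¹' Icc t' 1)) t' ≤ tInt star ν g := le_tInt star ν g ht'
  linarith

/-- Subbasic sets of the first kind are open. -/
lemma isOpen_Ominus {F : Closeds Y} {a : ℝ} (ha : a ∈ Icc (0:ℝ) 1) :
    IsOpen {c : Capacity Y | c.toFun F < a} :=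
  isOpen_generateFrom_of_mem (Or.inl ⟨F, a, ha, rfl⟩)

/-- Subbasic sets of the second kind are open. -/
lemma isOpen_Oplus {U : Set Y} (hU : IsOpen U) {a : ℝ} (ha : a ∈ Icc (0:ℝ) 1) :
    IsOpen {c : Capacity Y | a < c.oval U} :=
  isOpen_generateFrom_of_mem (Or.inr ⟨U, hU, a, ha, rfl⟩)

end Core

section Nbhds

variable {Y : Type u} [TopologicalSpace Y]

/-- An open neighborhood of `ν₀` on which the integral does not increase by more
than `2ε`. -/
lemma exists_upper_nbhd (star : Tnorm) (ν₀ : Capacity Y) (f : Y → ℝ) {δ ε : ℝ}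
    (hδ : 0 < δ) (hε : 0 ≤ ε)
    (H : ∀ s ∈ Icc (0:ℝ) 1, ∀ t ∈ Icc (0:ℝ) 1, ∀ s' ∈ Icc (0:ℝ) 1, ∀ t' ∈ Icc (0:ℝ) 1,
      |s - s'| ≤ δ → |t - t'| ≤ δ → |star.toFun s t - star.toFun s' t'| ≤ ε) :
    ∃ N : Set (Capacity Y), IsOpen N ∧ ν₀ ∈ N ∧
      ∀ ν ∈ N, tInt star ν f ≤ tInt star ν₀ f + 2*ε := by
  obtain ⟨m, hm⟩ := exists_nat_one_div_lt hδ
  set M : ℕ := m + 1 with hMdef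
  have hM : (0:ℝ) < (M:ℝ) := by positivity
  have hMδ : 1 / (M:ℝ) < δ := by exact_mod_cast hm
  set clos : ℕ → Closeds Y := fun k =>
    ⟨closure (f ⁻¹' Icc ((k:ℝ)/(M:ℝ)) 1), isClosed_closure⟩ with hclos
  refine ⟨⋂ k ∈ Finset.range (M+1), {c : Capacity Y | c.toFun (clos k) < ν₀.toFun (clos k) + δ},
    ?_, ?_, ?_⟩
  · refine isOpen_biInter_finset (fun k _ => ?_)
    by_cases h : ν₀.toFun (clos k) + δ ≤ 1
    · exact isOpen_Ominus ⟨by linarith [ν₀.toFun_nonneg (clos k)], h⟩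
    · have : {c : Capacity Y | c.toFun (clos k) < ν₀.toFun (clos k) + δ} = univ :=
        eq_univ_of_forall fun c => lt_of_le_of_lt (c.toFun_le_one _) (not_le.mp h)
      rw [this]; exact isOpen_univ
  · exact mem_iInter₂.mpr fun k _ => lt_add_of_pos_right _ hδ
  · intro ν hν
    rw [mem_iInter₂] at hν
    refine tInt_le star ν f (fun t ht => ?_)
    set k : ℕ := (⌊t * (M:ℝ)⌋).toNat with hkdef
    have htM : (0:ℝ) ≤ t * (M:ℝ) := mul_nonneg ht.1 hM.le
    have hkcast : (k:ℝ) = (⌊t * (M:ℝ)⌋ : ℝ) := by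
      rw [hkdef]; exact_mod_cast Int.toNat_of_nonneg (Int.floor_nonneg.mpr htM)
    have hkle : (k:ℝ) ≤ t * (M:ℝ) := by rw [hkcast]; exact Int.floor_le _
    have hklt : t * (M:ℝ) < (k:ℝ) + 1 := by rw [hkcast]; exact Int.lt_floor_add_one _
    set tk : ℝ := (k:ℝ)/(M:ℝ) with htkdef
    have htk_le : tk ≤ t := by rw [htkdef, div_le_iff₀ hM]; linarith
    have htk_close : |t - tk| ≤ δ := by
      rw [abs_le]
      constructor
      · linarith
      · have h7 : t < ((k:ℝ)+1)/(M:ℝ) := by rw [lt_div_iff₀ hM]; linarith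
        have h8 : ((k:ℝ)+1)/(M:ℝ) = tk + 1/(M:ℝ) := by rw [htkdef]; ring
        linarith
    have hkM : (k:ℝ) ≤ (M:ℝ) := le_trans hkle (by nlinarith [ht.2])
    have hkMnat : k ≤ M := by exact_mod_cast hkM
    have htk : tk ∈ Icc (0:ℝ) 1 := by
      constructor
      · positivity
      · rw [htkdef, div_le_one hM]; exact hkM
    have hmem := hν k (Finset.mem_range.mpr (Nat.lt_succ_of_le hkMnat))
    -- `cval` is definitionally `toFun` of the closure
    have h4 : ν.cval (f ⁻¹' Icc tk 1) < ν₀.cval (f ⁻¹' Icc tk 1) + δ := hmem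
    have h1 : ν.cval (f ⁻¹' Icc t 1) ≤ ν.cval (f ⁻¹' Icc tk 1) :=
      ν.cval_mono (preimage_mono (Icc_subset_Icc htk_le (le_refl 1)))
    have h2 : star.toFun (ν.cval (f ⁻¹' Icc t 1)) t ≤ star.toFun (ν.cval (f ⁻¹' Icc tk 1)) t :=
      star.mono' _ (ν.cval_mem _) _ (ν.cval_mem _) t ht t ht h1 (le_refl t)
    have h3 : star.toFun (ν.cval (f ⁻¹' Icc tk 1)) t ≤
        star.toFun (ν.cval (f ⁻¹' Icc tk 1)) tk + ε := by
      have h := H (ν.cval (f ⁻¹' Icc tk 1)) (ν.cval_mem _) t ht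
        (ν.cval (f ⁻¹' Icc tk 1)) (ν.cval_mem _) tk htk
        (by rw [sub_self, abs_zero]; exact hδ.le) htk_close
      have := abs_le.mp h
      linarith [this.2]
    have h5 : star.toFun (ν.cval (f ⁻¹' Icc tk 1)) tk ≤
        star.toFun (ν₀.cval (f ⁻¹' Icc tk 1)) tk + ε := by
      rcases le_or_gt (ν.cval (f ⁻¹' Icc tk 1)) (ν₀.cval (f ⁻¹' Icc tk 1)) with hle | hlt
      · have := star.mono' _ (ν.cval_mem _) _ (ν₀.cval_mem _) tk htk tk htk hle (le_refl tk)
        linarith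
      · have h := H (ν.cval (f ⁻¹' Icc tk 1)) (ν.cval_mem _) tk htk
          (ν₀.cval (f ⁻¹' Icc tk 1)) (ν₀.cval_mem _) tk htk
          (by rw [abs_le]; constructor <;> linarith)
          (by rw [sub_self, abs_zero]; exact hδ.le)
        have := abs_le.mp h
        linarith [this.2]
    have h6 : star.toFun (ν₀.cval (f ⁻¹' Icc tk 1)) tk ≤ tInt star ν₀ f := le_tInt star ν₀ f htk
    linarith

end Nbhds

section Lower

variable {Y : Type u} [TopologicalSpace Y]

/-- An open neighborhood of `ν₀` on which the integral does not decrease by more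
than `3ε`. -/
lemma exists_lower_nbhd (star : Tnorm) (ν₀ : Capacity Y) {f : Y → ℝ}
    (hf : Continuous f) (hf01 : ∀ y, f y ∈ Icc (0:ℝ) 1) {δ ε : ℝ}
    (hδ : 0 < δ) (hδε : δ ≤ ε)
    (H : ∀ s ∈ Icc (0:ℝ) 1, ∀ t ∈ Icc (0:ℝ) 1, ∀ s' ∈ Icc (0:ℝ) 1, ∀ t' ∈ Icc (0:ℝ) 1,
      |s - s'| ≤ δ → |t - t'| ≤ δ → |star.toFun s t - star.toFun s' t'| ≤ ε) :
    ∃ N : Set (Capacity Y), IsOpen N ∧ ν₀ ∈ N ∧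
      ∀ ν ∈ N, tInt star ν₀ f - 3*ε ≤ tInt star ν f := by
  have hε : 0 < ε := lt_of_lt_of_le hδ hδε
  by_cases htriv : tInt star ν₀ f ≤ 2*ε
  · exact ⟨univ, isOpen_univ, mem_univ _,
      fun ν _ => le_trans (by linarith) (tInt_nonneg star ν f)⟩
  push_neg at htriv
  obtain ⟨ts, hts, hstarts⟩ := tInt_exists_lt star ν₀ f (c := tInt star ν₀ f - ε) (by linarith)
  set ss : ℝ := ν₀.cval (f ⁻¹' Icc ts 1) with hssdef
  have hss_mem : ss ∈ Icc (0:ℝ) 1 := ν₀.cval_mem _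
  have hεstar : ε < star.toFun ss ts := by linarith
  have hεts : ε < ts := lt_of_lt_of_le hεstar (star.le_right hss_mem hts)
  have hεss : ε < ss := lt_of_lt_of_le hεstar (star.le_left hss_mem hts)
  set t' : ℝ := ts - δ with ht'def
  have ht' : t' ∈ Icc (0:ℝ) 1 := ⟨by linarith, by linarith [hts.2]⟩
  set a : ℝ := ss - δ with hadef
  have ha : a ∈ Icc (0:ℝ) 1 := ⟨by linarith, by linarith [hss_mem.2]⟩
  have hUopen : IsOpen (f ⁻¹' Ioi t') := IsOpen.preimage hf isOpen_Ioi
  refine ⟨{c : Capacity Y | a < c.oval (f ⁻¹' Ioi t')}, isOpen_Oplus hUopen ha, ?_, ?_⟩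
  · -- ν₀ belongs to the neighborhood
    have hclosed : IsClosed (f ⁻¹' Icc ts 1) := IsClosed.preimage hf isClosed_Icc
    have hsubU : (f ⁻¹' Icc ts 1) ⊆ f ⁻¹' Ioi t' := fun y hy => by
      have : ts ≤ f y := hy.1
      show t' < f y
      linarith
    have hle : ν₀.toFun ⟨f ⁻¹' Icc ts 1, hclosed⟩ ≤ ν₀.oval (f ⁻¹' Ioi t') := by
      refine le_csSup ⟨1, ?_⟩ ⟨⟨f ⁻¹' Icc ts 1, hclosed⟩, hsubU, rfl⟩
      rintro r ⟨K, _, rfl⟩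
      exact ν₀.toFun_le_one K
    have hssK : ss = ν₀.toFun ⟨f ⁻¹' Icc ts 1, hclosed⟩ := ν₀.cval_eq_toFun hclosed
    show a < ν₀.oval (f ⁻¹' Ioi t')
    rw [hadef, hssK] at *
    linarith [hle]
  · intro ν hν
    have hν' : a < ν.oval (f ⁻¹' Ioi t') := hν
    -- extract a closed set K inside the open set with large value
    have hex : ∃ K : Closeds Y, (K : Set Y) ⊆ f ⁻¹' Ioi t' ∧ a < ν.toFun K := by
      by_contra hc
      push_neg at hc
      have : ν.oval (f ⁻¹' Ioi t') ≤ a := by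
        refine Real.sSup_le ?_ ha.1
        rintro r ⟨K, hKU, rfl⟩
        exact hc K hKU
      linarith
    obtain ⟨K, hKU, hK⟩ := hex
    have hclosed' : IsClosed (f ⁻¹' Icc t' 1) := IsClosed.preimage hf isClosed_Icc
    have hKsub : (K : Set Y) ⊆ f ⁻¹' Icc t' 1 := fun y hy =>
      ⟨le_of_lt (hKU hy), (hf01 y).2⟩
    have hc2 : a ≤ ν.cval (f ⁻¹' Icc t' 1) := by
      rw [ν.cval_eq_toFun hclosed']
      exact le_trans hK.le (ν.mono' K ⟨f ⁻¹' Icc t' 1, hclosed'⟩ hKsub)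
    have h1 : star.toFun a t' ≤ star.toFun (ν.cval (f ⁻¹' Icc t' 1)) t' :=
      star.mono' a ha _ (ν.cval_mem _) t' ht' t' ht' hc2 (le_refl t')
    have h2 : star.toFun (ν.cval (f ⁻¹' Icc t' 1)) t' ≤ tInt star ν f := le_tInt star ν f ht'
    have h3 : |star.toFun a t' - star.toFun ss ts| ≤ ε := by
      refine H a ha t' ht' ss hss_mem ts hts ?_ ?_
      · rw [hadef]; rw [show ss - δ - ss = -δ by ring, abs_neg, abs_of_pos hδ]
      · rw [ht'def]; rw [show ts - δ - ts = -δ by ring, abs_neg, abs_of_pos hδ]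
    have h4 := (abs_le.mp h3).1
    linarith

end Lower

section Joint

/-- Joint continuity of the t-normed integral in the parameter and the capacity. -/
lemma tInt_joint_continuous {Z : Type v} {Y : Type u} [TopologicalSpace Z] [TopologicalSpace Y]
    [CompactSpace Y] (star : Tnorm) (hstar : star.Cont) (f : Z → Y → ℝ)
    (hf : Continuous fun q : Z × Y => f q.1 q.2) (hf01 : ∀ z y, f z y ∈ Icc (0:ℝ) 1) :
    Continuous fun q : Z × Capacity Y => tInt star q.2 (f q.1) := by
  rw [continuous_iff_continuousAt]
  rintro ⟨x₀, ν₀⟩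
  rw [ContinuousAt, Metric.tendsto_nhds]
  intro ε hε
  set ε' : ℝ := ε/5 with hε'def
  have hε' : 0 < ε' := by positivity
  obtain ⟨δ₀, hδ₀, H₀⟩ := hstar.uc hε'
  set δ : ℝ := min δ₀ ε' with hδdef
  have hδ : 0 < δ := lt_min hδ₀ hε'
  have H : ∀ s ∈ Icc (0:ℝ) 1, ∀ t ∈ Icc (0:ℝ) 1, ∀ s' ∈ Icc (0:ℝ) 1, ∀ t' ∈ Icc (0:ℝ) 1,
      |s - s'| ≤ δ → |t - t'| ≤ δ → |star.toFun s t - star.toFun s' t'| ≤ ε' :=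
    fun s hs t ht s' hs' t' ht' h1 h2 =>
      H₀ s hs t ht s' hs' t' ht' (le_trans h1 (min_le_left _ _)) (le_trans h2 (min_le_left _ _))
  -- tube lemma: a neighborhood V of x₀ on which `f x` is uniformly `δ`-close to `f x₀`
  have hWopen : IsOpen {q : Z × Y | |f q.1 q.2 - f x₀ q.2| < δ} := by
    have hcont : Continuous fun q : Z × Y => |f q.1 q.2 - f x₀ q.2| :=
      (hf.sub (hf.comp (continuous_const.prodMk continuous_snd))).abs
    exact isOpen_lt hcont continuous_const
  have hsub : ({x₀} : Set Z) ×ˢ (univ : Set Y) ⊆ {q : Z × Y | |f q.1 q.2 - f x₀ q.2| < δ} := by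
    intro q hq
    obtain ⟨hx, -⟩ := hq
    rw [mem_singleton_iff] at hx
    show |f q.1 q.2 - f x₀ q.2| < δ
    rw [hx, sub_self, abs_zero]
    exact hδ
  obtain ⟨V, W, hVopen, -, hx₀V, hUW, hVW⟩ :=
    generalized_tube_lemma isCompact_singleton isCompact_univ hWopen hsub
  have hVclose : ∀ x ∈ V, ∀ y, |f x y - f x₀ y| ≤ δ := fun x hx y =>
    le_of_lt (hVW (mk_mem_prod hx (hUW (mem_univ y))))
  have hfx₀ : Continuous (f x₀) := hf.comp (continuous_const.prodMk continuous_id)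
  obtain ⟨N₁, hN₁open, hN₁mem, hN₁⟩ := exists_upper_nbhd star ν₀ (f x₀) hδ hε'.le H
  obtain ⟨N₂, hN₂open, hN₂mem, hN₂⟩ :=
    exists_lower_nbhd star ν₀ hfx₀ (hf01 x₀) hδ (min_le_right _ _) H
  refine Filter.eventually_of_mem
    ((hVopen.prod (hN₁open.inter hN₂open)).mem_nhds
      ⟨hx₀V (mem_singleton _), hN₁mem, hN₂mem⟩) ?_
  rintro ⟨x, ν⟩ ⟨hxV, hν₁, hν₂⟩
  rw [Real.dist_eq]
  have hA1 : tInt star ν (f x) ≤ tInt star ν (f x₀) + ε' :=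
    tInt_le_tInt_add star ν (hf01 x₀) hδ H (hVclose x hxV)
  have hA2 : tInt star ν (f x₀) ≤ tInt star ν (f x) + ε' :=
    tInt_le_tInt_add star ν (hf01 x) hδ H
      (fun y => by rw [abs_sub_comm]; exact hVclose x hxV y)
  have hB1 := hN₁ ν hν₁
  have hB2 := hN₂ ν hν₂
  rw [abs_lt]
  constructor
  · simp only at hA1 hA2 hB1 hB2 ⊢
    linarith
  · simp only at hA1 hA2 hB1 hB2 ⊢
    linarith

end Joint
/-- for any `n`-player game with compacta `Xᵢ` and a continuous payoff map
`p` into `[0,1]ⁿ`, any continuous t-norm `∗` and any player `i`, the expected payoff map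
`P*ᵢ : Xᵢ × MX₋ᵢ → [0,1]` is continuous. -/
theorem expected_payoff_continuous {n : ℕ} (X : Fin (n+1) → Type u)
    [∀ j, TopologicalSpace (X j)] [∀ j, CompactSpace (X j)] [∀ j, T2Space (X j)]
    (p : (∀ j, X j) → Fin (n+1) → ℝ) (hp : Continuous p)
    (hp01 : ∀ x j, p x j ∈ Icc (0:ℝ) 1)
    (star : Tnorm) (hstar : star.Cont) (i : Fin (n+1)) :
    Continuous (fun q : X i × Capacity (∀ k : Fin n, X (i.succAbove k)) =>
      Pexp X p star i q.1 q.2) := by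
  have hins : Continuous fun q : X i × (∀ k : Fin n, X (i.succAbove k)) =>
      i.insertNth q.1 q.2 := by
    apply continuous_pi
    intro j
    refine Fin.succAboveCases i ?_ ?_ j
    · simp only [Fin.insertNth_apply_same]
      exact continuous_fst
    · intro k
      simp only [Fin.insertNth_apply_succAbove]
      exact (continuous_apply k).comp continuous_snd
  exact tInt_joint_continuous star hstar
    (fun x y => p (i.insertNth x y) i)
    (((continuous_apply i).comp hp).comp hins)
    (fun x y => hp01 _ i)
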